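/- arXiv:2106.01422 — 3 statements merged into one kernel-verified Lean document; each statement's English description precedes it below -/
import Mathlib

section
/- Let α ≥ 0, β > 0, and for smooth f : ℝ^d × ℝ → ℝ define Γ^{α,β}(f) = Σ_{i=1}^d (∂f/∂p_i − α ∂f/∂ξ)² + β (∂f/∂ξ)². Then the associated intrinsic control distance satisfies d_{α,β}((p,ξ),(p',ξ'))² = (1/β)(α Σ_{i=1}^d (p'_i − p_i) + ξ' − ξ)² + Σ_{i=1}^d (p'_i − p_i)². -/
open scoped BigOperators

noncomputable def dpP (d : ℕ) (i : Fin d) (f : (Fin d → ℝ) × ℝ → ℝ)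
    (x : (Fin d → ℝ) × ℝ) : ℝ :=
  fderiv ℝ f x (Pi.single i 1, 0)

noncomputable def dXi (d : ℕ) (f : (Fin d → ℝ) × ℝ → ℝ) (x : (Fin d → ℝ) × ℝ) : ℝ :=
  fderiv ℝ f x (0, 1)

/-- The carré du champ type form `Γ^{α,β}`. -/
noncomputable def GammaAB (d : ℕ) (α β : ℝ) (f g : (Fin d → ℝ) × ℝ → ℝ)
    (x : (Fin d → ℝ) × ℝ) : ℝ :=
  ∑ i, (dpP d i f x - α * dXi d f x) * (dpP d i g x - α * dXi d g x)
    + β * dXi d f x * dXi d g x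

/-- Cauchy-Schwarz with one extra coordinate. -/
lemma cs_aux (S1 S2 S3 b c : ℝ) (h : S1^2 ≤ S2*S3) (h2 : 0 ≤ S2) (h3 : 0 ≤ S3) :
    (S1 + b*c)^2 ≤ (S2 + b^2)*(S3 + c^2) := by
  rcases eq_or_lt_of_le h3 with h3' | h3'
  · have hS1 : S1 = 0 := by nlinarith
    rw [hS1, ← h3']
    nlinarith [mul_nonneg h2 (sq_nonneg c)]
  · nlinarith [sq_nonneg (S1*c - S3*b), mul_nonneg h3 (sub_nonneg.2 h),
      mul_nonneg (sub_nonneg.2 h) (sq_nonneg c), h3'.le]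

/-- Decomposition of a linear functional on `(Fin d → ℝ) × ℝ`. -/
lemma decomp (d : ℕ) (L : ((Fin d → ℝ) × ℝ) →L[ℝ] ℝ) (v : Fin d → ℝ) (w : ℝ) :
    L (v, w) = ∑ i, v i * L (Pi.single i 1, 0) + w * L (0, 1) := by
  have hv : (v, w) = (∑ i, Pi.single i (v i), (0:ℝ)) + ((0 : Fin d → ℝ), w) := by
    rw [Finset.univ_sum_single]
    ext1 <;> simp
  rw [hv, map_add]
  congr 1
  · have h1 : ((∑ i, Pi.single i (v i) : Fin d → ℝ), (0:ℝ))
        = ∑ i, ((Pi.single i (v i) : Fin d → ℝ), (0:ℝ)) := by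
      ext1 <;> simp [Prod.fst_sum, Prod.snd_sum]
    rw [h1, map_sum]
    refine Finset.sum_congr rfl fun i _ => ?_
    have h2 : ((Pi.single i (v i) : Fin d → ℝ), (0:ℝ))
        = v i • ((Pi.single i 1 : Fin d → ℝ), (0:ℝ)) := by
      rw [Prod.smul_mk]
      congr 1
      · ext j
        by_cases hj : j = i <;> simp [Pi.single_apply, hj]
      · simp
    rw [h2, map_smul, smul_eq_mul]
  · have h3 : ((0:Fin d → ℝ), w) = w • ((0:Fin d → ℝ), (1:ℝ)) := by
      rw [Prod.smul_mk]; simp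
    rw [h3, map_smul, smul_eq_mul]

theorem stmt3 (d : ℕ) (α β : ℝ) (hα : 0 ≤ α) (hβ : 0 < β)
    (p p' : Fin d → ℝ) (ξ ξ' : ℝ) :
    (sSup {y : ℝ | ∃ f : (Fin d → ℝ) × ℝ → ℝ, ContDiff ℝ (⊤ : ℕ∞) f ∧
        (∀ x, GammaAB d α β f f x ≤ 1) ∧ y = f (p, ξ) - f (p', ξ')}) ^ 2
      = (1 / β) * (α * ∑ i, (p' i - p i) + ξ' - ξ) ^ 2 + ∑ i, (p' i - p i) ^ 2 := by
  have hβ' : (β:ℝ) ≠ 0 := ne_of_gt hβ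
  set A : ℝ := α * ∑ i, (p' i - p i) + ξ' - ξ with hA
  set R : ℝ := (1 / β) * A ^ 2 + ∑ i, (p' i - p i) ^ 2 with hRdef
  have hR : 0 ≤ R := by
    apply add_nonneg
    · positivity
    · exact Finset.sum_nonneg fun i _ => sq_nonneg _
  set D : ℝ := Real.sqrt R with hDdef
  have hD2 : D ^ 2 = R := Real.sq_sqrt hR
  have hD0 : 0 ≤ D := Real.sqrt_nonneg R
  set Y : Set ℝ := {y : ℝ | ∃ f : (Fin d → ℝ) × ℝ → ℝ, ContDiff ℝ (⊤ : ℕ∞) f ∧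
        (∀ x, GammaAB d α β f f x ≤ 1) ∧ y = f (p, ξ) - f (p', ξ')} with hY
  -- the linear candidate functions
  have mem_lin : ∀ (c : Fin d → ℝ) (c₀ : ℝ),
      (∑ i, (c i - α * c₀) ^ 2) + β * c₀ ^ 2 ≤ 1 →
      (∑ i, c i * (p i - p' i) + c₀ * (ξ - ξ')) ∈ Y := by
    intro c c₀ hΓ
    set L : ((Fin d → ℝ) × ℝ) →L[ℝ] ℝ :=
      (∑ i, c i • ((ContinuousLinearMap.proj i).comp
          (ContinuousLinearMap.fst ℝ (Fin d → ℝ) ℝ)))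
        + c₀ • ContinuousLinearMap.snd ℝ (Fin d → ℝ) ℝ with hL
    have hLapp : ∀ v w, L (v, w) = ∑ i, c i * v i + c₀ * w := by
      intro v w
      rw [hL]
      simp [ContinuousLinearMap.sum_apply]
    have hfd : ∀ x, fderiv ℝ (⇑L) x = L := fun x => L.fderiv
    have hdp : ∀ i x, dpP d i (⇑L) x = c i := by
      intro i x
      rw [dpP, hfd, hLapp]
      simp [Pi.single_apply]
    have hdx : ∀ x, dXi d (⇑L) x = c₀ := by
      intro x
      rw [dXi, hfd, hLapp]
      simp
    refine ⟨⇑L, L.contDiff, ?_, ?_⟩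
    · intro x
      rw [GammaAB]
      simp only [hdp, hdx]
      calc ∑ i, (c i - α * c₀) * (c i - α * c₀) + β * c₀ * c₀
          = (∑ i, (c i - α * c₀) ^ 2) + β * c₀ ^ 2 := by
            rw [mul_assoc, ← sq]
            congr 1
            exact Finset.sum_congr rfl fun i _ => (sq _).symm
        _ ≤ 1 := hΓ
    · rw [hLapp, hLapp]
      have e : ∑ i, c i * (p i - p' i) = (∑ i, c i * p i) - ∑ i, c i * p' i := by
        rw [← Finset.sum_sub_distrib]
        exact Finset.sum_congr rfl fun i _ => by ring
      rw [e]
      ring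
  -- Upper bound
  have hub : ∀ y ∈ Y, y ≤ D := by
    rintro y ⟨f, hf, hΓ, rfl⟩
    set x₁ : (Fin d → ℝ) × ℝ := (p, ξ) with hx1
    set x₀ : (Fin d → ℝ) × ℝ := (p', ξ') with hx0
    set γ : ℝ → (Fin d → ℝ) × ℝ := fun t => x₀ + t • (x₁ - x₀) with hγ
    have hγd : ∀ t : ℝ, HasDerivAt γ (x₁ - x₀) t := by
      intro t
      have h := ((hasDerivAt_id t).smul_const (x₁ - x₀)).const_add x₀
      rw [one_smul] at h
      exact h
    set ψ : ℝ → ℝ := fun t => fderiv ℝ f (γ t) (x₁ - x₀) with hψ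
    have hφd : ∀ t : ℝ, HasDerivAt (f ∘ γ) (ψ t) t := by
      intro t
      exact ((hf.differentiable (by simp)).differentiableAt.hasFDerivAt).comp_hasDerivAt t (hγd t)
    have hbound : ∀ t : ℝ, ‖ψ t‖ ≤ D := by
      intro t
      have h1 : ψ t = ∑ i, (p i - p' i) * dpP d i f (γ t) + (ξ - ξ') * dXi d f (γ t) := by
        have hxx : x₁ - x₀ = ((fun i => p i - p' i), ξ - ξ') := rfl
        rw [hψ]
        simp only [hxx]
        exact decomp d (fderiv ℝ f (γ t)) _ _
      set a : Fin d → ℝ := fun i => dpP d i f (γ t) - α * dXi d f (γ t) with ha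
      set u : ℝ := dXi d f (γ t) with hu
      have hsβ : Real.sqrt β ≠ 0 := ne_of_gt (Real.sqrt_pos.2 hβ)
      have hsβ2 : Real.sqrt β ^ 2 = β := Real.sq_sqrt hβ.le
      have h2 : ψ t = (∑ i, (p i - p' i) * a i) + (Real.sqrt β * u) * (-A / Real.sqrt β) := by
        rw [h1]
        have e1 : ∀ i : Fin d, (p i - p' i) * dpP d i f (γ t)
            = (p i - p' i) * a i + α * u * (p i - p' i) := fun i => by
          rw [ha, hu]; ring
        rw [Finset.sum_congr rfl fun i _ => e1 i, Finset.sum_add_distrib, ← Finset.mul_sum]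
        have e2 : (Real.sqrt β * u) * (-A / Real.sqrt β) = u * (-A) := by
          field_simp
        rw [e2, hA]
        have e3 : ∑ i, (p i - p' i) = -∑ i, (p' i - p i) := by
          rw [← Finset.sum_neg_distrib]
          exact Finset.sum_congr rfl fun i _ => by ring
        rw [e3]
        ring
      have hCS : (∑ i, (p i - p' i) * a i)^2
          ≤ (∑ i, a i ^ 2) * (∑ i, (p i - p' i) ^ 2) := by
        have := Finset.sum_mul_sq_le_sq_mul_sq Finset.univ (fun i => p i - p' i) a
        calc (∑ i, (p i - p' i) * a i)^2
            ≤ (∑ i, (p i - p' i) ^ 2) * (∑ i, a i ^ 2) := this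
          _ = (∑ i, a i ^ 2) * (∑ i, (p i - p' i) ^ 2) := mul_comm _ _
      have hψ2 : (ψ t) ^ 2 ≤ R := by
        have key := cs_aux (∑ i, (p i - p' i) * a i) (∑ i, a i ^ 2)
          (∑ i, (p i - p' i) ^ 2) (Real.sqrt β * u) (-A / Real.sqrt β) hCS
          (Finset.sum_nonneg fun i _ => sq_nonneg _)
          (Finset.sum_nonneg fun i _ => sq_nonneg _)
        rw [← h2] at key
        have hb2 : (Real.sqrt β * u) ^ 2 = β * u ^ 2 := by
          rw [mul_pow, hsβ2]
        have hc2 : (-A / Real.sqrt β) ^ 2 = A ^ 2 / β := by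
          rw [div_pow, neg_pow, hsβ2]
          simp
        rw [hb2, hc2] at key
        have hG : (∑ i, a i ^ 2) + β * u ^ 2 ≤ 1 := by
          have := hΓ (γ t)
          rw [GammaAB] at this
          calc (∑ i, a i ^ 2) + β * u ^ 2
              = ∑ i, (dpP d i f (γ t) - α * dXi d f (γ t)) *
                  (dpP d i f (γ t) - α * dXi d f (γ t))
                + β * dXi d f (γ t) * dXi d f (γ t) := by
                rw [ha, hu]
                congr 1
                · exact Finset.sum_congr rfl fun i _ => sq _
                · ring
            _ ≤ 1 := this
        have hsum : (∑ i, (p i - p' i) ^ 2) + A ^ 2 / β = R := by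
          rw [hRdef]
          have : ∑ i, (p i - p' i) ^ 2 = ∑ i, (p' i - p i) ^ 2 :=
            Finset.sum_congr rfl fun i _ => by ring
          rw [this]
          field_simp
          ring
        calc (ψ t) ^ 2 ≤ ((∑ i, a i ^ 2) + β * u ^ 2) *
              ((∑ i, (p i - p' i) ^ 2) + A ^ 2 / β) := key
          _ ≤ 1 * R := by
            rw [← hsum] at hR ⊢
            exact mul_le_mul_of_nonneg_right hG (by linarith [hsum ▸ hR])
          _ = R := one_mul R
      rw [Real.norm_eq_abs, ← Real.sqrt_sq_eq_abs, hDdef]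
      exact Real.sqrt_le_sqrt hψ2
    have key := Convex.norm_image_sub_le_of_norm_hasDerivWithin_le
      (f := f ∘ γ) (f' := ψ) (s := Set.univ) (C := D)
      (fun t _ => (hφd t).hasDerivWithinAt)
      (fun t _ => hbound t) convex_univ (Set.mem_univ (0:ℝ)) (Set.mem_univ (1:ℝ))
    have hγ1 : γ 1 = x₁ := by
      rw [hγ]; simp
    have hγ0 : γ 0 = x₀ := by
      rw [hγ]; simp
    have : |f x₁ - f x₀| ≤ D * 1 := by
      have := key
      rw [Function.comp_apply, Function.comp_apply, hγ1, hγ0] at this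
      simpa using this
    calc f (p, ξ) - f (p', ξ') = f x₁ - f x₀ := rfl
      _ ≤ |f x₁ - f x₀| := le_abs_self _
      _ ≤ D := by linarith
  -- Lower bound: D is attained
  have hmemD : D ∈ Y := by
    by_cases hR0 : R = 0
    · have hD0' : D = 0 := by rw [hDdef, hR0, Real.sqrt_zero]
      have := mem_lin 0 0 (by simp)
      simpa [hD0'] using this
    · have hDne : D ≠ 0 := by
        rw [hDdef]
        exact Real.sqrt_ne_zero'.2 (lt_of_le_of_ne hR (Ne.symm hR0))
      set c₀ : ℝ := -A / (β * D) with hc₀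
      set c : Fin d → ℝ := fun i => -(p' i - p i) / D + α * c₀ with hc
      have hΓc : (∑ i, (c i - α * c₀) ^ 2) + β * c₀ ^ 2 ≤ 1 := by
        have e1 : ∀ i : Fin d, (c i - α * c₀) ^ 2 = (p' i - p i) ^ 2 / D ^ 2 := by
          intro i
          rw [hc]
          field_simp
          ring
        rw [Finset.sum_congr rfl fun i _ => e1 i, hc₀]
        have : (∑ i, (p' i - p i) ^ 2 / D ^ 2) + β * (-A / (β * D)) ^ 2
            = ((∑ i, (p' i - p i) ^ 2) + A ^ 2 / β) / D ^ 2 := by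
          rw [← Finset.sum_div]
          field_simp
        rw [this, hD2]
        have hRe : (∑ i, (p' i - p i) ^ 2) + A ^ 2 / β = R := by
          rw [hRdef]; field_simp; ring
        rw [hRe, div_self hR0]
      have hval : (∑ i, c i * (p i - p' i) + c₀ * (ξ - ξ')) = D := by
        have e1 : ∀ i : Fin d, c i * (p i - p' i)
            = (p' i - p i) ^ 2 / D + α * c₀ * (p i - p' i) := by
          intro i
          rw [hc]
          field_simp
          ring
        rw [Finset.sum_congr rfl fun i _ => e1 i, Finset.sum_add_distrib, ← Finset.mul_sum]
        have e3 : ∑ i, (p i - p' i) = -∑ i, (p' i - p i) := by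
          rw [← Finset.sum_neg_distrib]
          exact Finset.sum_congr rfl fun i _ => by ring
        rw [e3, ← Finset.sum_div, hc₀]
        have hgoal : (∑ i, (p' i - p i) ^ 2) / D
            + α * (-A / (β * D)) * (-∑ i, (p' i - p i))
            + (-A / (β * D)) * (ξ - ξ') = R / D := by
          rw [hRdef, hA]
          field_simp
          ring
        rw [hgoal, ← hD2]
        field_simp
      have := mem_lin c c₀ hΓc
      rwa [hval] at this
  have hbdd : BddAbove Y := ⟨D, hub⟩
  have hne : Y.Nonempty := ⟨D, hmemD⟩
  have hsup : sSup Y = D := le_antisymm (csSup_le hne hub) (le_csSup hbdd hmemD)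
  rw [hsup, hD2]
end

section
/- Let F : ℝ^d → ℝ be C¹ with m ≤ ∂F/∂p_i(p) ≤ M for all i and all p, where 0 < m ≤ M. For the operator L = (1/2)Δ_p + F(p)·∂/∂ξ with carré du champ Γ(f) = Σ_i (∂f/∂p_i)², and Γ₂^{α,β}(f) := (1/2)L Γ^{α,β}(f) − Γ^{α,β}(f, Lf), one has for all smooth f and all α > 0, β ≥ 0: Γ₂^{α,β}(f) ≥ −((M−m)/(4α))·Γ(f) + m·Σ_{i=1}^d ( α (∂f/∂ξ)² − (∂f/∂ξ)(∂f/∂p_i) ). -/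
open scoped BigOperators

/-- Generator of the generalized Kolmogorov diffusion: `L = (1/2)Δ_p + F(p)·∂/∂ξ`. -/
noncomputable def Lop (d : ℕ) (F : (Fin d → ℝ) → ℝ) (f : (Fin d → ℝ) × ℝ → ℝ)
    (x : (Fin d → ℝ) × ℝ) : ℝ :=
  (1 / 2) * ∑ i, dpP d i (dpP d i f) x + F x.1 * dXi d f x

/-- The carré du champ `Γ(f) = Σ_i (∂f/∂p_i)²`. -/
noncomputable def GammaOp (d : ℕ) (f : (Fin d → ℝ) × ℝ → ℝ) (x : (Fin d → ℝ) × ℝ) : ℝ :=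
  ∑ i, (dpP d i f x) ^ 2

/-- `Γ₂^{α,β}(f) = (1/2) L Γ^{α,β}(f) − Γ^{α,β}(f, Lf)`. -/
noncomputable def Gamma2 (d : ℕ) (F : (Fin d → ℝ) → ℝ) (α β : ℝ)
    (f : (Fin d → ℝ) × ℝ → ℝ) (x : (Fin d → ℝ) × ℝ) : ℝ :=
  (1 / 2) * Lop d F (GammaAB d α β f f) x - GammaAB d α β f (Lop d F f) x

section Helpers
variable {d : ℕ}

private lemma smoothD {f : (Fin d → ℝ) × ℝ → ℝ} (hf : ContDiff ℝ (⊤ : ℕ∞) f)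
    (v : (Fin d → ℝ) × ℝ) : ContDiff ℝ (⊤ : ℕ∞) (fun x => fderiv ℝ f x v) :=
  (hf.fderiv_right (by simp)).clm_apply contDiff_const

private lemma Dcomm {f : (Fin d → ℝ) × ℝ → ℝ} (hf : ContDiff ℝ (⊤ : ℕ∞) f)
    (v w : (Fin d → ℝ) × ℝ) :
    (fun x => fderiv ℝ (fun y => fderiv ℝ f y w) x v)
      = fun x => fderiv ℝ (fun y => fderiv ℝ f y v) x w := by
  funext x
  have hg : ContDiff ℝ (⊤ : ℕ∞) (fderiv ℝ f) := hf.fderiv_right (by simp)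
  have hgd : DifferentiableAt ℝ (fderiv ℝ f) x := (hg.differentiable (by simp)) x
  have key : ∀ z : (Fin d → ℝ) × ℝ,
      fderiv ℝ (fun y => fderiv ℝ f y z) x = (fderiv ℝ (fderiv ℝ f) x).flip z := by
    intro z
    have h := fderiv_clm_apply hgd (differentiableAt_const z)
    simpa using h
  rw [key w, key v]
  simp only [ContinuousLinearMap.flip_apply]
  exact (hf.contDiffAt.isSymmSndFDerivAt (by simp only [minSmoothness_of_isRCLikeNormedField]; exact WithTop.coe_le_coe.mpr le_top)) v w

private lemma key_ineq {m M α c u w : ℝ} (hα : 0 < α)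
    (hc1 : m ≤ c) (hc2 : c ≤ M) :
    -((M - m) / (4 * α)) * w ^ 2 + m * (α * u ^ 2 - u * w) ≤ c * u * (α * u - w) := by
  have h4 : (0:ℝ) < 4 * α := by linarith
  rw [← sub_nonneg]
  have expand : c * u * (α * u - w) - (-((M - m) / (4 * α)) * w ^ 2 + m * (α * u ^ 2 - u * w))
      = ((c - m) * (4 * α * (α * u ^ 2 - u * w)) + (M - m) * w ^ 2) / (4 * α) := by
    field_simp
    ring
  rw [expand]
  apply div_nonneg _ h4.le
  rcases le_or_gt 0 (α * u ^ 2 - u * w) with h | h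
  · have h1 : 0 ≤ (c - m) * (4 * α * (α * u ^ 2 - u * w)) :=
      mul_nonneg (by linarith) (mul_nonneg h4.le h)
    nlinarith [sq_nonneg w]
  · have hXneg : 4 * α * (α * u ^ 2 - u * w) < 0 := mul_neg_of_pos_of_neg h4 h
    nlinarith [mul_nonneg (show (0:ℝ) ≤ M - c by linarith) (neg_nonneg.2 hXneg.le),
      mul_nonneg (show (0:ℝ) ≤ M - m by linarith)
        (show (0:ℝ) ≤ 4 * α * (α * u ^ 2 - u * w) + w ^ 2 by nlinarith [sq_nonneg (2 * α * u - w)])]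

private lemma fderiv_G {f : (Fin d → ℝ) × ℝ → ℝ} (hf : ContDiff ℝ (⊤ : ℕ∞) f) (α β : ℝ)
    (x v : (Fin d → ℝ) × ℝ) :
    fderiv ℝ (GammaAB d α β f f) x v
      = (∑ j, 2 * (dpP d j f x - α * dXi d f x) *
            (fderiv ℝ (dpP d j f) x v - α * fderiv ℝ (dXi d f) x v))
          + 2 * β * (dXi d f x * fderiv ℝ (dXi d f) x v) := by
  have hP : ∀ j : Fin d, HasFDerivAt (dpP d j f) (fderiv ℝ (dpP d j f) x) x :=
    fun j => ((smoothD hf (Pi.single j 1, 0)).differentiable (by simp) x).hasFDerivAt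
  have hX : HasFDerivAt (dXi d f) (fderiv ℝ (dXi d f) x) x :=
    ((smoothD hf (0, 1)).differentiable (by simp) x).hasFDerivAt
  have HS : HasFDerivAt
      (fun y => ∑ j, (dpP d j f y - α * dXi d f y) * (dpP d j f y - α * dXi d f y))
      (∑ j, ((dpP d j f x - α * dXi d f x) • (fderiv ℝ (dpP d j f) x - α • fderiv ℝ (dXi d f) x)
        + (dpP d j f x - α * dXi d f x) •
          (fderiv ℝ (dpP d j f) x - α • fderiv ℝ (dXi d f) x))) x :=
    HasFDerivAt.fun_sum (fun j _ =>
      (((hP j).sub (hX.const_mul α)).mul ((hP j).sub (hX.const_mul α))))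
  have HG : HasFDerivAt (GammaAB d α β f f)
      ((∑ j, ((dpP d j f x - α * dXi d f x) • (fderiv ℝ (dpP d j f) x - α • fderiv ℝ (dXi d f) x)
        + (dpP d j f x - α * dXi d f x) •
          (fderiv ℝ (dpP d j f) x - α • fderiv ℝ (dXi d f) x)))
        + ((β * dXi d f x) • fderiv ℝ (dXi d f) x + dXi d f x • (β • fderiv ℝ (dXi d f) x))) x :=
    HS.add ((hX.const_mul β).mul hX)
  rw [HG.fderiv]
  simp only [ContinuousLinearMap.sum_apply, ContinuousLinearMap.add_apply,
    ContinuousLinearMap.smul_apply, ContinuousLinearMap.sub_apply, smul_eq_mul]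
  rw [add_right_cancel_iff.mpr rfl]
  · exact congrArg₂ (· + ·) (Finset.sum_congr rfl fun j _ => by ring) (by ring)

private lemma fderiv_G2 {f : (Fin d → ℝ) × ℝ → ℝ} (hf : ContDiff ℝ (⊤ : ℕ∞) f) (α β : ℝ)
    (i : Fin d) (x v : (Fin d → ℝ) × ℝ) :
    fderiv ℝ (fun y => (∑ j, 2 * (dpP d j f y - α * dXi d f y) *
          (dpP d i (dpP d j f) y - α * dpP d i (dXi d f) y))
        + 2 * β * (dXi d f y * dpP d i (dXi d f) y)) x v
      = (∑ j, (2 * (fderiv ℝ (dpP d j f) x v - α * fderiv ℝ (dXi d f) x v) *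
            (dpP d i (dpP d j f) x - α * dpP d i (dXi d f) x)
          + 2 * (dpP d j f x - α * dXi d f x) *
            (fderiv ℝ (dpP d i (dpP d j f)) x v - α * fderiv ℝ (dpP d i (dXi d f)) x v)))
        + 2 * β * (fderiv ℝ (dXi d f) x v * dpP d i (dXi d f) x
            + dXi d f x * fderiv ℝ (dpP d i (dXi d f)) x v) := by
  have hsP : ∀ j : Fin d, ContDiff ℝ (⊤ : ℕ∞) (dpP d j f) := fun j => smoothD hf (Pi.single j 1, 0)
  have hsX : ContDiff ℝ (⊤ : ℕ∞) (dXi d f) := smoothD hf (0, 1)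
  have hP : ∀ j : Fin d, HasFDerivAt (dpP d j f) (fderiv ℝ (dpP d j f) x) x :=
    fun j => ((hsP j).differentiable (by simp) x).hasFDerivAt
  have hX : HasFDerivAt (dXi d f) (fderiv ℝ (dXi d f) x) x :=
    (hsX.differentiable (by simp) x).hasFDerivAt
  have hPP : ∀ j : Fin d, HasFDerivAt (dpP d i (dpP d j f)) (fderiv ℝ (dpP d i (dpP d j f)) x) x :=
    fun j => ((smoothD (hsP j) (Pi.single i 1, 0)).differentiable (by simp) x).hasFDerivAt
  have hPX : HasFDerivAt (dpP d i (dXi d f)) (fderiv ℝ (dpP d i (dXi d f)) x) x :=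
    ((smoothD hsX (Pi.single i 1, 0)).differentiable (by simp) x).hasFDerivAt
  have HS : HasFDerivAt
      (fun y => ∑ j, 2 * (dpP d j f y - α * dXi d f y) *
          (dpP d i (dpP d j f) y - α * dpP d i (dXi d f) y))
      (∑ j, ((2 * (dpP d j f x - α * dXi d f x)) •
          (fderiv ℝ (dpP d i (dpP d j f)) x - α • fderiv ℝ (dpP d i (dXi d f)) x)
        + (dpP d i (dpP d j f) x - α * dpP d i (dXi d f) x) •
          ((2:ℝ) • (fderiv ℝ (dpP d j f) x - α • fderiv ℝ (dXi d f) x)))) x :=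
    HasFDerivAt.fun_sum (fun j _ =>
      ((((hP j).sub (hX.const_mul α)).const_mul 2).mul ((hPP j).sub (hPX.const_mul α))))
  have HG2 : HasFDerivAt
      (fun y => (∑ j, 2 * (dpP d j f y - α * dXi d f y) *
          (dpP d i (dpP d j f) y - α * dpP d i (dXi d f) y))
        + 2 * β * (dXi d f y * dpP d i (dXi d f) y))
      ((∑ j, ((2 * (dpP d j f x - α * dXi d f x)) •
          (fderiv ℝ (dpP d i (dpP d j f)) x - α • fderiv ℝ (dpP d i (dXi d f)) x)
        + (dpP d i (dpP d j f) x - α * dpP d i (dXi d f) x) •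
          ((2:ℝ) • (fderiv ℝ (dpP d j f) x - α • fderiv ℝ (dXi d f) x))))
        + (2 * β) • (dXi d f x • fderiv ℝ (dpP d i (dXi d f)) x
            + dpP d i (dXi d f) x • fderiv ℝ (dXi d f) x)) x :=
    HS.add ((hX.mul hPX).const_mul (2 * β))
  rw [HG2.fderiv]
  simp only [ContinuousLinearMap.sum_apply, ContinuousLinearMap.add_apply,
    ContinuousLinearMap.smul_apply, ContinuousLinearMap.sub_apply, smul_eq_mul]
  exact congrArg₂ (· + ·) (Finset.sum_congr rfl fun j _ => by ring) (by ring)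

private lemma fderiv_L {F : (Fin d → ℝ) → ℝ} {f : (Fin d → ℝ) × ℝ → ℝ}
    (hF : ContDiff ℝ 1 F) (hf : ContDiff ℝ (⊤ : ℕ∞) f) (x v : (Fin d → ℝ) × ℝ) :
    fderiv ℝ (Lop d F f) x v
      = (1/2 : ℝ) * ∑ i, fderiv ℝ (dpP d i (dpP d i f)) x v
        + (F x.1 * fderiv ℝ (dXi d f) x v + dXi d f x * fderiv ℝ F x.1 v.1) := by
  have hsP : ∀ j : Fin d, ContDiff ℝ (⊤ : ℕ∞) (dpP d j f) := fun j => smoothD hf (Pi.single j 1, 0)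
  have hX : HasFDerivAt (dXi d f) (fderiv ℝ (dXi d f) x) x :=
    ((smoothD hf (0, 1)).differentiable (by simp) x).hasFDerivAt
  have hPP : ∀ i : Fin d, HasFDerivAt (dpP d i (dpP d i f)) (fderiv ℝ (dpP d i (dpP d i f)) x) x :=
    fun i => ((smoothD (hsP i) (Pi.single i 1, 0)).differentiable (by simp) x).hasFDerivAt
  have Hfst : HasFDerivAt (fun y : (Fin d → ℝ) × ℝ => F y.1)
      ((fderiv ℝ F x.1).comp (ContinuousLinearMap.fst ℝ (Fin d → ℝ) ℝ)) x :=
    ((hF.differentiable (by simp) x.1).hasFDerivAt).comp x hasFDerivAt_fst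
  have HS : HasFDerivAt (fun y => ∑ i, dpP d i (dpP d i f) y)
      (∑ i, fderiv ℝ (dpP d i (dpP d i f)) x) x :=
    HasFDerivAt.fun_sum (fun i _ => hPP i)
  have HL : HasFDerivAt (Lop d F f)
      ((1/2 : ℝ) • (∑ i, fderiv ℝ (dpP d i (dpP d i f)) x)
        + (F x.1 • fderiv ℝ (dXi d f) x
          + dXi d f x • ((fderiv ℝ F x.1).comp (ContinuousLinearMap.fst ℝ (Fin d → ℝ) ℝ)))) x :=
    (HS.const_mul (1/2 : ℝ)).add (Hfst.mul hX)
  rw [HL.fderiv]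
  simp only [ContinuousLinearMap.add_apply, ContinuousLinearMap.smul_apply,
    ContinuousLinearMap.sum_apply, ContinuousLinearMap.comp_apply,
    ContinuousLinearMap.coe_fst', smul_eq_mul]

end Helpers

theorem stmt4 (d : ℕ) (F : (Fin d → ℝ) → ℝ) (m M : ℝ) (hm : 0 < m) (hmM : m ≤ M)
    (hF : ContDiff ℝ 1 F)
    (hbound : ∀ (p : Fin d → ℝ) (i : Fin d),
      m ≤ fderiv ℝ F p (Pi.single i 1) ∧ fderiv ℝ F p (Pi.single i 1) ≤ M)
    (f : (Fin d → ℝ) × ℝ → ℝ) (hf : ContDiff ℝ (⊤ : ℕ∞) f)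
    (α β : ℝ) (hα : 0 < α) (hβ : 0 ≤ β) (x : (Fin d → ℝ) × ℝ) :
    Gamma2 d F α β f x ≥
      -((M - m) / (4 * α)) * GammaOp d f x
        + m * ∑ i, (α * (dXi d f x) ^ 2 - dXi d f x * dpP d i f x) := by
  classical
  have hsP : ∀ j : Fin d, ContDiff ℝ (⊤ : ℕ∞) (dpP d j f) := fun j => smoothD hf (Pi.single j 1, 0)
  have hsX : ContDiff ℝ (⊤ : ℕ∞) (dXi d f) := smoothD hf (0, 1)
  have cPPg : ∀ (g : (Fin d → ℝ) × ℝ → ℝ), ContDiff ℝ (⊤ : ℕ∞) g → ∀ i j : Fin d,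
      dpP d j (dpP d i g) = dpP d i (dpP d j g) := fun g hg i j => Dcomm hg _ _
  have cXPg : ∀ (g : (Fin d → ℝ) × ℝ → ℝ), ContDiff ℝ (⊤ : ℕ∞) g → ∀ i : Fin d,
      dXi d (dpP d i g) = dpP d i (dXi d g) := fun g hg i => Dcomm hg _ _
  have c3 : ∀ i j : Fin d, dpP d j (dpP d i (dpP d i f)) = dpP d i (dpP d i (dpP d j f)) := by
    intro i j
    rw [cPPg _ (hsP i) i j, cPPg f hf i j]
  have c4 : ∀ i : Fin d, dXi d (dpP d i (dpP d i f)) = dpP d i (dpP d i (dXi d f)) := by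
    intro i
    rw [cXPg _ (hsP i) i, cXPg f hf i]
  -- first p-derivative of Γ^{α,β}(f,f), function level
  have hDiG : ∀ i : Fin d, dpP d i (GammaAB d α β f f)
      = fun y => (∑ j, 2 * (dpP d j f y - α * dXi d f y) *
          (dpP d i (dpP d j f) y - α * dpP d i (dXi d f) y))
        + 2 * β * (dXi d f y * dpP d i (dXi d f) y) :=
    fun i => funext fun y => fderiv_G hf α β y (Pi.single i 1, 0)
  -- second p-derivative of Γ^{α,β}(f,f) at x
  have hDDG : ∀ i : Fin d, dpP d i (dpP d i (GammaAB d α β f f)) x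
      = (∑ j, (2 * (dpP d i (dpP d j f) x - α * dpP d i (dXi d f) x) *
            (dpP d i (dpP d j f) x - α * dpP d i (dXi d f) x)
          + 2 * (dpP d j f x - α * dXi d f x) *
            (dpP d i (dpP d i (dpP d j f)) x - α * dpP d i (dpP d i (dXi d f)) x)))
        + 2 * β * (dpP d i (dXi d f) x * dpP d i (dXi d f) x
            + dXi d f x * dpP d i (dpP d i (dXi d f)) x) := by
    intro i
    rw [hDiG i]
    exact fderiv_G2 hf α β i x (Pi.single i 1, 0)
  -- ξ-derivative of Γ^{α,β}(f,f) at x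
  have hXG : dXi d (GammaAB d α β f f) x
      = (∑ j, 2 * (dpP d j f x - α * dXi d f x) *
          (dpP d j (dXi d f) x - α * dXi d (dXi d f) x))
        + 2 * β * (dXi d f x * dXi d (dXi d f) x) := by
    refine (fderiv_G hf α β x (0, 1)).trans ?_
    show (∑ j, 2 * (dpP d j f x - α * dXi d f x) *
          (dXi d (dpP d j f) x - α * dXi d (dXi d f) x))
        + 2 * β * (dXi d f x * dXi d (dXi d f) x) = _
    exact congrArg₂ (· + ·)
      (Finset.sum_congr rfl fun j _ => by rw [cXPg f hf j]) rfl
  -- derivatives of Lf at x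
  have hLe : ∀ j : Fin d, dpP d j (Lop d F f) x
      = (1/2 : ℝ) * ∑ i, dpP d i (dpP d i (dpP d j f)) x
        + (F x.1 * dpP d j (dXi d f) x + dXi d f x * fderiv ℝ F x.1 (Pi.single j 1)) := by
    intro j
    refine (fderiv_L hF hf x (Pi.single j 1, 0)).trans ?_
    show (1/2 : ℝ) * ∑ i, dpP d j (dpP d i (dpP d i f)) x
        + (F x.1 * dpP d j (dXi d f) x + dXi d f x * fderiv ℝ F x.1 (Pi.single j 1)) = _
    exact congrArg₂ (fun a b => (1/2 : ℝ) * a + b)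
      (Finset.sum_congr rfl fun i _ => congrFun (c3 i j) x) rfl
  have hLx : dXi d (Lop d F f) x
      = (1/2 : ℝ) * ∑ i, dpP d i (dpP d i (dXi d f)) x + F x.1 * dXi d (dXi d f) x := by
    refine (fderiv_L hF hf x (0, 1)).trans ?_
    show (1/2 : ℝ) * ∑ i, dXi d (dpP d i (dpP d i f)) x
        + (F x.1 * dXi d (dXi d f) x + dXi d f x * fderiv ℝ F x.1 0) = _
    simp only [c4, map_zero, mul_zero, add_zero]
  -- the key identity
  have hmain : Gamma2 d F α β f x
      = (1/2 : ℝ) * ∑ j, ∑ i, (dpP d i (dpP d j f) x - α * dpP d i (dXi d f) x) ^ 2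
        + (β/2) * ∑ i, dpP d i (dXi d f) x ^ 2
        + ∑ j, fderiv ℝ F x.1 (Pi.single j 1) * dXi d f x * (α * dXi d f x - dpP d j f x) := by
    simp only [Gamma2, Lop, GammaAB]
    rw [show ∑ i, dpP d i (dpP d i (GammaAB d α β f f)) x = ∑ i,
      ((∑ j, (2 * (dpP d i (dpP d j f) x - α * dpP d i (dXi d f) x) *
            (dpP d i (dpP d j f) x - α * dpP d i (dXi d f) x)
          + 2 * (dpP d j f x - α * dXi d f x) *
            (dpP d i (dpP d i (dpP d j f)) x - α * dpP d i (dpP d i (dXi d f)) x)))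
        + 2 * β * (dpP d i (dXi d f) x * dpP d i (dXi d f) x
            + dXi d f x * dpP d i (dpP d i (dXi d f)) x))
      from Finset.sum_congr rfl fun i _ => hDDG i]
    rw [hXG]
    simp only [hLe, hLx]
    rw [show ∑ i : Fin d, ((∑ j, (2 * (dpP d i (dpP d j f) x - α * dpP d i (dXi d f) x) *
            (dpP d i (dpP d j f) x - α * dpP d i (dXi d f) x)
          + 2 * (dpP d j f x - α * dXi d f x) *
            (dpP d i (dpP d i (dpP d j f)) x - α * dpP d i (dpP d i (dXi d f)) x)))
        + 2 * β * (dpP d i (dXi d f) x * dpP d i (dXi d f) x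
            + dXi d f x * dpP d i (dpP d i (dXi d f)) x))
      = (∑ i : Fin d, ∑ j, (2 * (dpP d i (dpP d j f) x - α * dpP d i (dXi d f) x) *
            (dpP d i (dpP d j f) x - α * dpP d i (dXi d f) x)
          + 2 * (dpP d j f x - α * dXi d f x) *
            (dpP d i (dpP d i (dpP d j f)) x - α * dpP d i (dpP d i (dXi d f)) x)))
        + ((2 * β) * ∑ i : Fin d, dpP d i (dXi d f) x ^ 2
          + (2 * β * dXi d f x) * ∑ i : Fin d, dpP d i (dpP d i (dXi d f)) x) from by
      rw [Finset.sum_add_distrib]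
      congr 1
      calc ∑ i : Fin d, 2 * β * (dpP d i (dXi d f) x * dpP d i (dXi d f) x
              + dXi d f x * dpP d i (dpP d i (dXi d f)) x)
          = ∑ i : Fin d, ((2 * β) * dpP d i (dXi d f) x ^ 2
              + (2 * β * dXi d f x) * dpP d i (dpP d i (dXi d f)) x) :=
            Finset.sum_congr rfl fun i _ => by ring
        _ = _ := by rw [Finset.sum_add_distrib, ← Finset.mul_sum, ← Finset.mul_sum]]
    rw [Finset.sum_comm]
    have hT : ∑ j : Fin d, ((dpP d j f x - α * dXi d f x) *
          (1 / 2 * ∑ i : Fin d, dpP d i (dpP d i (dpP d j f)) x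
            + (F x.1 * dpP d j (dXi d f) x + dXi d f x * fderiv ℝ F x.1 (Pi.single j 1))
            - α * (1 / 2 * ∑ i : Fin d, dpP d i (dpP d i (dXi d f)) x
              + F x.1 * dXi d (dXi d f) x)))
        = (1/4 : ℝ) * ∑ j : Fin d, ∑ i : Fin d,
            (2 * (dpP d i (dpP d j f) x - α * dpP d i (dXi d f) x) *
              (dpP d i (dpP d j f) x - α * dpP d i (dXi d f) x)
            + 2 * (dpP d j f x - α * dXi d f x) *
              (dpP d i (dpP d i (dpP d j f)) x - α * dpP d i (dpP d i (dXi d f)) x))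
          + (F x.1 / 2) * ∑ j : Fin d, (2 * (dpP d j f x - α * dXi d f x) *
              (dpP d j (dXi d f) x - α * dXi d (dXi d f) x))
          - (1/2 : ℝ) * ∑ j : Fin d, ∑ i : Fin d,
              (dpP d i (dpP d j f) x - α * dpP d i (dXi d f) x) ^ 2
          - ∑ j : Fin d, fderiv ℝ F x.1 (Pi.single j 1) * dXi d f x *
              (α * dXi d f x - dpP d j f x) := by
      calc ∑ j : Fin d, ((dpP d j f x - α * dXi d f x) *
            (1 / 2 * ∑ i : Fin d, dpP d i (dpP d i (dpP d j f)) x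
              + (F x.1 * dpP d j (dXi d f) x + dXi d f x * fderiv ℝ F x.1 (Pi.single j 1))
              - α * (1 / 2 * ∑ i : Fin d, dpP d i (dpP d i (dXi d f)) x
                + F x.1 * dXi d (dXi d f) x)))
          = ∑ j : Fin d, ((1/4 : ℝ) * ∑ i : Fin d,
              (2 * (dpP d i (dpP d j f) x - α * dpP d i (dXi d f) x) *
                (dpP d i (dpP d j f) x - α * dpP d i (dXi d f) x)
              + 2 * (dpP d j f x - α * dXi d f x) *
                (dpP d i (dpP d i (dpP d j f)) x - α * dpP d i (dpP d i (dXi d f)) x))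
            + (F x.1 / 2) * (2 * (dpP d j f x - α * dXi d f x) *
                (dpP d j (dXi d f) x - α * dXi d (dXi d f) x))
            - (1/2 : ℝ) * ∑ i : Fin d,
                (dpP d i (dpP d j f) x - α * dpP d i (dXi d f) x) ^ 2
            - fderiv ℝ F x.1 (Pi.single j 1) * dXi d f x *
                (α * dXi d f x - dpP d j f x)) := by
            refine Finset.sum_congr rfl fun j _ => ?_
            have hs : ∑ i : Fin d,
                (2 * (dpP d i (dpP d j f) x - α * dpP d i (dXi d f) x) *
                  (dpP d i (dpP d j f) x - α * dpP d i (dXi d f) x)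
                + 2 * (dpP d j f x - α * dXi d f x) *
                  (dpP d i (dpP d i (dpP d j f)) x - α * dpP d i (dpP d i (dXi d f)) x))
                = 2 * (∑ i : Fin d, (dpP d i (dpP d j f) x - α * dpP d i (dXi d f) x) ^ 2)
                  + (2 * (dpP d j f x - α * dXi d f x)) *
                    ∑ i : Fin d, dpP d i (dpP d i (dpP d j f)) x
                  - (2 * α * (dpP d j f x - α * dXi d f x)) *
                    ∑ i : Fin d, dpP d i (dpP d i (dXi d f)) x := by
              calc ∑ i : Fin d,
                  (2 * (dpP d i (dpP d j f) x - α * dpP d i (dXi d f) x) *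
                    (dpP d i (dpP d j f) x - α * dpP d i (dXi d f) x)
                  + 2 * (dpP d j f x - α * dXi d f x) *
                    (dpP d i (dpP d i (dpP d j f)) x - α * dpP d i (dpP d i (dXi d f)) x))
                  = ∑ i : Fin d, (2 * (dpP d i (dpP d j f) x - α * dpP d i (dXi d f) x) ^ 2
                    + (2 * (dpP d j f x - α * dXi d f x)) * dpP d i (dpP d i (dpP d j f)) x
                    - (2 * α * (dpP d j f x - α * dXi d f x)) * dpP d i (dpP d i (dXi d f)) x) :=
                  Finset.sum_congr rfl fun i _ => by ring
                _ = _ := by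
                  rw [Finset.sum_sub_distrib, Finset.sum_add_distrib, ← Finset.mul_sum,
                    ← Finset.mul_sum, ← Finset.mul_sum]
            rw [hs]
            ring
        _ = _ := by
          simp only [Finset.sum_sub_distrib, Finset.sum_add_distrib, ← Finset.mul_sum]
    rw [hT]
    ring
  rw [ge_iff_le, hmain]
  have hrhs : -((M - m) / (4 * α)) * GammaOp d f x
      + m * ∑ i, (α * (dXi d f x) ^ 2 - dXi d f x * dpP d i f x)
      = ∑ j, (-((M - m) / (4 * α)) * dpP d j f x ^ 2
          + m * (α * dXi d f x ^ 2 - dXi d f x * dpP d j f x)) := by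
    rw [show GammaOp d f x = ∑ j, dpP d j f x ^ 2 from rfl, Finset.mul_sum, Finset.mul_sum,
      ← Finset.sum_add_distrib]
  rw [hrhs]
  have h1 : 0 ≤ ∑ j, ∑ i : Fin d, (dpP d i (dpP d j f) x - α * dpP d i (dXi d f) x) ^ 2 :=
    Finset.sum_nonneg fun j _ => Finset.sum_nonneg fun i _ => sq_nonneg _
  have h1b : 0 ≤ ∑ i : Fin d, dpP d i (dXi d f) x ^ 2 :=
    Finset.sum_nonneg fun i _ => sq_nonneg _
  have h2 : ∑ j, (-((M - m) / (4 * α)) * dpP d j f x ^ 2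
        + m * (α * dXi d f x ^ 2 - dXi d f x * dpP d j f x))
      ≤ ∑ j, fderiv ℝ F x.1 (Pi.single j 1) * dXi d f x * (α * dXi d f x - dpP d j f x) :=
    Finset.sum_le_sum fun j _ => key_ineq hα (hbound x.1 j).1 (hbound x.1 j).2
  nlinarith [mul_nonneg hβ h1b]
end

section
/- Let P_t be a Markov semigroup on ℝ^n and d a metric such that for all nonnegative bounded Borel f, all t > 0, x, y, and α > 1, the Wang Harnack inequality (P_t f)^α(x) ≤ (P_t f^α)(y)·exp( C·α/(α−1)·d(x,y)²/t ) holds, and suppose P_t has a strictly positive density p_t(x,·) with respect to a reference measure. Then for q = 1/(α−1) with α ∈ (1,2), the integrated Harnack inequality ( ∫ (p_t(x,z)/p_t(y,z))^q p_t(y,z) dz )^{1/q} ≤ exp( C·(1+q)·d(x,y)²/t ) holds. -/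
open MeasureTheory Filter
open scoped Topology

/-!
Apply the Harnack inequality, with factor `Φ = exp (C α / (α - 1) d(x, y)² / t)`, to
`f = (p_x / p_y) ^ (q - 1)`, truncated at level `m` so that it is bounded. With `I = ∫ (p_x / p_y) ^ q p_y`, the left-hand side tends to `I ^ α`. On the right,
`f ^ α = (f ^ (1 / (2 - α))) ^ (α (2 - α))` with `f ^ (1 / (2 - α)) ≤ (p_x / p_y) ^ q`, so Jensen's
inequality for the concave power `α (2 - α) ≤ 1` under the probability density `p_y` bounds
`∫ p_y f ^ α` by `I ^ (α (2 - α))`. Hence `I ^ α ≤ I ^ (α (2 - α)) Φ`, i.e. `I ^ (α (α - 1)) ≤ Φ`,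
and `I ^ (α - 1) ≤ Φ` follows since `Φ ≥ 1` (Harnack for `f = 1`).
-/

lemma rpow_sub_one_le_of_rpow_le_rpow_mul {I Φ α : ℝ} (hI : 0 ≤ I) (hΦ : 1 ≤ Φ) (hα : 1 ≤ α)
    (h : I ^ α ≤ I ^ (α * (2 - α)) * Φ) : I ^ (α - 1) ≤ Φ := by
  rcases le_or_gt I 1 with hI₁ | hI₁
  · exact (Real.rpow_le_one hI hI₁ (by linarith)).trans hΦ
  have hI₀ : 0 < I := by linarith
  have hsplit : I ^ α = I ^ (α * (2 - α)) * I ^ (α * (α - 1)) := by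
    rw [← Real.rpow_add hI₀]; ring_nf
  rw [hsplit] at h
  calc I ^ (α - 1) ≤ I ^ (α * (α - 1)) :=
        Real.rpow_le_rpow_of_exponent_le hI₁.le (by nlinarith)
    _ ≤ Φ := le_of_mul_le_mul_left h (Real.rpow_pos_of_pos hI₀ _)

section
variable {E : Type*} [MeasurableSpace E] {μ : Measure E}

lemma integral_withDensity_ofReal {w : E → ℝ} (hw : AEMeasurable w μ) (hw₀ : 0 ≤ᵐ[μ] w)
    (h : E → ℝ) :
    ∫ z, h z ∂μ.withDensity (fun z => ENNReal.ofReal (w z)) = ∫ z, w z * h z ∂μ := by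
  rw [integral_withDensity_eq_integral_toReal_smul₀ hw.ennreal_ofReal
    (.of_forall fun _ => ENNReal.ofReal_lt_top)]
  refine integral_congr_ae ?_
  filter_upwards [hw₀] with z hz
  simp [ENNReal.toReal_ofReal hz]

lemma integrable_withDensity_ofReal_iff {w : E → ℝ} (hw : AEMeasurable w μ) (hw₀ : 0 ≤ᵐ[μ] w)
    {h : E → ℝ} :
    Integrable h (μ.withDensity (fun z => ENNReal.ofReal (w z))) ↔
      Integrable (fun z => w z * h z) μ := by
  rw [integrable_withDensity_iff_integrable_smul₀' hw.ennreal_ofReal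
    (.of_forall fun _ => ENNReal.ofReal_lt_top)]
  refine integrable_congr ?_
  filter_upwards [hw₀] with z hz
  simp [ENNReal.toReal_ofReal hz]

lemma integral_mul_rpow_le_rpow_integral_mul {w v : E → ℝ} {θ : ℝ} (hθ₀ : 0 ≤ θ) (hθ₁ : θ ≤ 1)
    (hw : Integrable w μ) (hw₀ : 0 ≤ᵐ[μ] w) (hw₁ : ∫ z, w z ∂μ = 1) (hv₀ : ∀ z, 0 ≤ v z)
    (hwv : Integrable (fun z => w z * v z) μ) (hwvθ : Integrable (fun z => w z * v z ^ θ) μ) :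
    ∫ z, w z * v z ^ θ ∂μ ≤ (∫ z, w z * v z ∂μ) ^ θ := by
  have hwm := hw.aemeasurable
  have : IsProbabilityMeasure (μ.withDensity fun z => ENNReal.ofReal (w z)) := by
    constructor
    rw [withDensity_apply _ MeasurableSet.univ, Measure.restrict_univ,
      ← ofReal_integral_eq_lintegral_ofReal hw hw₀, hw₁, ENNReal.ofReal_one]
  simp only [← integral_withDensity_ofReal hwm hw₀]
  exact (Real.concaveOn_rpow hθ₀ hθ₁).le_map_integral
    (continuous_id.rpow_const fun _ => Or.inr hθ₀).continuousOn isClosed_Ici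
    (.of_forall hv₀) ((integrable_withDensity_ofReal_iff hwm hw₀).2 hwv)
    ((integrable_withDensity_ofReal_iff hwm hw₀).2 hwvθ)

lemma integral_mul_rpow_le_rpow_integral_mul_of_le {w v h : E → ℝ} {θ M : ℝ} (hθ₀ : 0 ≤ θ)
    (hθ₁ : θ ≤ 1) (hw : Integrable w μ) (hw₀ : 0 ≤ᵐ[μ] w) (hw₁ : ∫ z, w z ∂μ = 1)
    (hv : AEStronglyMeasurable v μ) (hv₀ : ∀ z, 0 ≤ v z) (hvM : ∀ z, v z ≤ M)
    (hvh : v ≤ᵐ[μ] h) (hwh : Integrable (fun z => w z * h z) μ) :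
    ∫ z, w z * v z ^ θ ∂μ ≤ (∫ z, w z * h z ∂μ) ^ θ := by
  have hwv : Integrable (fun z => w z * v z) μ :=
    hw.mul_bdd hv (.of_forall fun z => by rw [Real.norm_of_nonneg (hv₀ z)]; exact hvM z)
  have hwvθ : Integrable (fun z => w z * v z ^ θ) μ :=
    hw.mul_bdd (hv.aemeasurable.pow_const θ).aestronglyMeasurable (.of_forall fun z => by
      rw [Real.norm_of_nonneg (Real.rpow_nonneg (hv₀ z) θ)]
      exact Real.rpow_le_rpow (hv₀ z) (hvM z) hθ₀)
  have hwv_le : ∫ z, w z * v z ∂μ ≤ ∫ z, w z * h z ∂μ := by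
    refine integral_mono_ae hwv hwh ?_
    filter_upwards [hw₀, hvh] with z hwz hvz
    exact mul_le_mul_of_nonneg_left hvz hwz
  calc ∫ z, w z * v z ^ θ ∂μ ≤ (∫ z, w z * v z ∂μ) ^ θ :=
        integral_mul_rpow_le_rpow_integral_mul hθ₀ hθ₁ hw hw₀ hw₁ hv₀ hwv hwvθ
    _ ≤ (∫ z, w z * h z ∂μ) ^ θ :=
        Real.rpow_le_rpow (integral_nonneg_of_ae (by
          filter_upwards [hw₀] with z hz
          exact mul_nonneg hz (hv₀ z))) hwv_le hθ₀

lemma tendsto_integral_mul_min_natCast {a b : E → ℝ} (ha : AEStronglyMeasurable a μ)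
    (hb : AEStronglyMeasurable b μ) (ha₀ : ∀ z, 0 ≤ a z) (hb₀ : ∀ z, 0 ≤ b z)
    (hab : Integrable (fun z => a z * b z) μ) :
    Tendsto (fun m : ℕ => ∫ z, a z * min (b z) m ∂μ) atTop (𝓝 (∫ z, a z * b z ∂μ)) := by
  refine tendsto_integral_of_dominated_convergence _
    (fun m => ha.mul (hb.inf aestronglyMeasurable_const)) hab
    (fun m => .of_forall fun z => ?_) (.of_forall fun z => ?_)
  · rw [Real.norm_of_nonneg (mul_nonneg (ha₀ z) (le_min (hb₀ z) m.cast_nonneg))]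
    exact mul_le_mul_of_nonneg_left (min_le_left _ _) (ha₀ z)
  · obtain ⟨M, hM⟩ := exists_nat_ge (b z)
    exact tendsto_atTop_of_eventually_const fun m hm => by
      rw [min_eq_left (hM.trans (Nat.cast_le.2 hm))]

lemma integral_mul_min_rpow_le {w r g : E → ℝ} {α : ℝ} (hα₁ : 1 < α) (hα₂ : α < 2)
    (hw : Integrable w μ) (hw₀ : 0 ≤ᵐ[μ] w) (hw₁ : ∫ z, w z ∂μ = 1) (hr₀ : ∀ z, 0 ≤ r z)
    (hg : Measurable g) (hg₀ : 0 ≤ g) (hrg : (fun z => r z ^ ((2 - α) / (α - 1))) =ᵐ[μ] g)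
    (hI : Integrable (fun z => r z ^ (1 / (α - 1)) * w z) μ) (m : ℕ) :
    ∫ z, w z * min (g z) m ^ α ∂μ ≤ (∫ z, r z ^ (1 / (α - 1)) * w z ∂μ) ^ (α * (2 - α)) := by
  have h2α : 0 < 2 - α := by linarith
  have hs : 0 ≤ 1 / (2 - α) := by positivity
  have hmin₀ z : 0 ≤ min (g z) m := le_min (hg₀ z) m.cast_nonneg
  have hv_le : (fun z => min (g z) m ^ (1 / (2 - α))) ≤ᵐ[μ] fun z => r z ^ (1 / (α - 1)) := by
    filter_upwards [hrg] with z hz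
    calc min (g z) m ^ (1 / (2 - α)) ≤ g z ^ (1 / (2 - α)) :=
          Real.rpow_le_rpow (hmin₀ z) (min_le_left _ _) hs
      _ = r z ^ (1 / (α - 1)) := by
        rw [← hz, ← Real.rpow_mul (hr₀ z)]
        congr 1
        field_simp
  have hmin_pow z : (min (g z) m ^ (1 / (2 - α))) ^ (α * (2 - α)) = min (g z) m ^ α := by
    rw [← Real.rpow_mul (hmin₀ z)]
    congr 1
    field_simp
  have hjensen := integral_mul_rpow_le_rpow_integral_mul_of_le (θ := α * (2 - α))
    (by nlinarith) (by nlinarith [sq_nonneg (α - 1)]) hw hw₀ hw₁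
    ((hg.min measurable_const).pow_const _).aestronglyMeasurable
    (fun z => Real.rpow_nonneg (hmin₀ z) _)
    (fun z => Real.rpow_le_rpow (hmin₀ z) (min_le_right _ _) hs) hv_le
    (by simpa only [mul_comm] using hI)
  simpa only [hmin_pow, mul_comm (w _)] using hjensen

theorem rpow_integral_le_of_harnack {px py : E → ℝ} {α Φ : ℝ} (hα₁ : 1 < α) (hα₂ : α < 2)
    (hΦ : 0 ≤ Φ) (hpx : AEMeasurable px μ) (hpx₀ : ∀ z, 0 ≤ px z) (hpy : Integrable py μ)
    (hpy₀ : ∀ z, 0 < py z) (hpy₁ : ∫ z, py z ∂μ = 1)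
    (hH : ∀ f : E → ℝ, Measurable f → (∀ z, 0 ≤ f z) → (∃ M : ℝ, ∀ z, f z ≤ M) →
      (∫ z, px z * f z ∂μ) ^ α ≤ (∫ z, py z * f z ^ α ∂μ) * Φ)
    (hI : Integrable (fun z => (px z / py z) ^ (1 / (α - 1)) * py z) μ) :
    (∫ z, (px z / py z) ^ (1 / (α - 1)) * py z ∂μ) ^ α
      ≤ (∫ z, (px z / py z) ^ (1 / (α - 1)) * py z ∂μ) ^ (α * (2 - α)) * Φ := by
  set r : E → ℝ := fun z => px z / py z
  set I := ∫ z, r z ^ (1 / (α - 1)) * py z ∂μ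
  have hr₀ z : 0 ≤ r z := div_nonneg (hpx₀ z) (hpy₀ z).le
  have hβ : 0 < α - 1 := by linarith
  have hr : AEMeasurable r μ := hpx.div hpy.aemeasurable
  have hq : 1 / (α - 1) = 1 + (2 - α) / (α - 1) := by field_simp; ring
  obtain ⟨g, hg, hg₀, hrg⟩ := (hr.pow_const ((2 - α) / (α - 1))).exists_measurable_nonneg
    (.of_forall fun z => Real.rpow_nonneg (hr₀ z) _)
  have hpxg : (fun z => px z * g z) =ᵐ[μ] fun z => r z ^ (1 / (α - 1)) * py z := by
    filter_upwards [hrg] with z hz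
    have hpx_eq : px z = r z * py z := (div_mul_cancel₀ _ (hpy₀ z).ne').symm
    rw [← hz, hpx_eq, hq, Real.rpow_add' (hr₀ z) (by rw [← hq]; positivity), Real.rpow_one]
    ring
  have hleft : Tendsto (fun m : ℕ => (∫ z, px z * min (g z) m ∂μ) ^ α) atTop (𝓝 (I ^ α)) := by
    rw [← show ∫ z, px z * g z ∂μ = I from integral_congr_ae hpxg]
    exact (tendsto_integral_mul_min_natCast hpx.aestronglyMeasurable hg.aestronglyMeasurable
      hpx₀ hg₀ (hI.congr hpxg.symm)).rpow_const (Or.inr (by linarith))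
  refine le_of_tendsto' hleft fun m => ?_
  exact (hH _ (hg.min measurable_const) (fun z => le_min (hg₀ z) m.cast_nonneg)
    ⟨m, fun z => min_le_right _ _⟩).trans <| mul_le_mul_of_nonneg_right
      (integral_mul_min_rpow_le hα₁ hα₂ hpy (.of_forall fun z => (hpy₀ z).le) hpy₁ hr₀ hg hg₀
        hrg hI m) hΦ

end

theorem stmt19 {E : Type*} [MeasurableSpace E] (μ : Measure E)
    (p : ℝ → E → E → ℝ) (d : E → E → ℝ) (C : ℝ)
    (hpos : ∀ t, 0 < t → ∀ x z, 0 < p t x z)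
    (hprob : ∀ t, 0 < t → ∀ x, ∫ z, p t x z ∂μ = 1)
    (hWang : ∀ f : E → ℝ, Measurable f → (∀ z, 0 ≤ f z) → (∃ Cb : ℝ, ∀ z, f z ≤ Cb) →
      ∀ t, 0 < t → ∀ x y : E, ∀ α : ℝ, 1 < α →
        (∫ z, p t x z * f z ∂μ) ^ α
          ≤ (∫ z, p t y z * (f z) ^ α ∂μ)
            * Real.exp (C * α / (α - 1) * d x y ^ 2 / t)) :
    ∀ t, 0 < t → ∀ x y : E, ∀ α : ℝ, 1 < α → α < 2 →
      (∫ z, (p t x z / p t y z) ^ (1 / (α - 1)) * p t y z ∂μ) ^ (α - 1)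
        ≤ Real.exp (C * (1 + 1 / (α - 1)) * d x y ^ 2 / t) := by
  intro t ht x y α hα₁ hα₂
  have hexp : C * α / (α - 1) = C * (1 + 1 / (α - 1)) := by
    have : α - 1 ≠ 0 := by linarith
    field_simp; ring
  have hH f hf hf₀ hfb := hexp ▸ hWang f hf hf₀ hfb t ht x y α hα₁
  have hp_int (x : E) : Integrable (p t x) μ := .of_integral_ne_zero (by simp [hprob t ht x])
  have hΦ : 1 ≤ Real.exp (C * (1 + 1 / (α - 1)) * d x y ^ 2 / t) := by
    simpa [hprob t ht x, hprob t ht y] using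
      hH (fun _ => 1) measurable_const (fun _ => zero_le_one) ⟨1, fun _ => le_rfl⟩
  by_cases hI : Integrable (fun z => (p t x z / p t y z) ^ (1 / (α - 1)) * p t y z) μ
  · have hI₀ : 0 ≤ ∫ z, (p t x z / p t y z) ^ (1 / (α - 1)) * p t y z ∂μ :=
      integral_nonneg fun z =>
        mul_nonneg (Real.rpow_nonneg (div_pos (hpos t ht x z) (hpos t ht y z)).le (1 / (α - 1)))
          (hpos t ht y z).le
    refine rpow_sub_one_le_of_rpow_le_rpow_mul hI₀ hΦ hα₁.le ?_
    exact rpow_integral_le_of_harnack hα₁ hα₂ (Real.exp_nonneg _) (hp_int x).aemeasurable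
      (fun z => (hpos t ht x z).le) (hp_int y) (hpos t ht y) (hprob t ht y) hH hI
  · rw [integral_undef hI, Real.zero_rpow (by linarith)]
    positivity
end
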